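/- Let ρ : [0,∞) → ℝ be given by ρ(θ) = ∫_0^∞ exp(−aθ) dμ(a) for a probability measure μ on [0,∞). Then the function x ↦ ρ(Arccos x) on [−1,1] can be written as ∑_{n=0}^∞ (c_n/n!) x^n with c_n = ∫_0^∞ e^{−aπ/2} r_n(a) dμ(a) ≥ 0 and ∑_n c_n/n! = ρ(0) < ∞, where r_n satisfies the recursion r_0 = 1, r_{n+1}(a) = a·∑_{k=0}^{⌊n/2⌋} binom(n,2k)·r_{n−2k}(a)·((2k−1)!!)². -/

import Mathlib

open Real Finset Filter Topology MeasureTheory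

/-!
For `a ≥ 0` the numbers `pₙ = rₙ(a) / n!` satisfy `(n + 1) pₙ₊₁ = a ∑_{i + j = n} wᵢ pⱼ`, where
`∑ wᵢ xⁱ = (1 - x²)^(-1/2) = arcsin' x` by the binomial series. Hence `f x = ∑ pₙ xⁿ` solves
`f' = a arcsin' · f`, `f 0 = 1`, on `(-1, 1)`, so `f x = exp (a arcsin x)` there; the series
converges on `(-1, 1)` because the partial sums `Sₙ` of the nonnegative `pₙ` satisfy
`Sₙ₊₁ ≤ (1 + a / (n + 1)) Sₙ`. The bound `f ≤ exp (a π / 2)` on `[0, 1)` makes `∑ pₙ` converge, and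
Abel's theorem extends the identity to `[-1, 1]`. As `arccos = π / 2 - arcsin`, the function
`exp (-a arccos x)` is a power series in `x` whose nonnegative coefficients sum to `1` at `x = 1`,
and integrating it termwise in `a` against `μ` (dominated convergence) expands `ρ ∘ arccos`.
-/

noncomputable def invSqrtCoeff (k : ℕ) : ℝ := ∏ i ∈ range k, (2 * i + 1 : ℝ) / (2 * i + 2)

lemma invSqrtCoeff_succ (k : ℕ) :
    invSqrtCoeff (k + 1) = invSqrtCoeff k * ((2 * k + 1) / (2 * k + 2)) :=
  prod_range_succ _ _

lemma invSqrtCoeff_nonneg (k : ℕ) : 0 ≤ invSqrtCoeff k :=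
  prod_nonneg fun _ _ => by positivity

lemma invSqrtCoeff_le_one (k : ℕ) : invSqrtCoeff k ≤ 1 :=
  prod_le_one (fun _ _ => by positivity) fun _ _ => by rw [div_le_one (by positivity)]; linarith

lemma ascPochhammer_eval_half (k : ℕ) :
    (ascPochhammer ℝ k).eval (1 / 2) = k.factorial * invSqrtCoeff k := by
  induction k with
  | zero => simp [invSqrtCoeff]
  | succ k ih =>
    rw [ascPochhammer_succ_eval, ih, invSqrtCoeff_succ, Nat.factorial_succ]
    push_cast
    field_simp
    ring

lemma invSqrtCoeff_eq_multichoose (k : ℕ) : invSqrtCoeff k = Ring.multichoose (1 / 2 : ℝ) k := by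
  have h := Ring.factorial_nsmul_multichoose_eq_ascPochhammer (1 / 2 : ℝ) k
  rw [Polynomial.ascPochhammer_smeval_eq_eval, nsmul_eq_mul, ascPochhammer_eval_half] at h
  exact (mul_left_cancel₀ (by positivity) h).symm

lemma invSqrtCoeff_eq_div_factorial (k : ℕ) :
    invSqrtCoeff k = ((∏ i ∈ range k, (2 * i + 1) : ℕ) : ℝ) ^ 2 / (2 * k).factorial := by
  induction k with
  | zero => simp [invSqrtCoeff]
  | succ k ih =>
    rw [invSqrtCoeff_succ, ih, prod_range_succ, show 2 * (k + 1) = 2 * k + 1 + 1 by ring,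
      Nat.factorial_succ, Nat.factorial_succ]
    push_cast
    field_simp
    ring

lemma hasSum_invSqrtCoeff_mul_pow {y : ℝ} (hy : |y| < 1) :
    HasSum (fun k => invSqrtCoeff k * y ^ k) (1 / √(1 - y)) := by
  have h := (Real.one_div_one_sub_rpow_hasFPowerSeriesOnBall_zero (1 / 2)).hasSum
    (y := y) (by simpa [Metric.mem_eball, edist_dist] using hy)
  simp only [FormalMultilinearSeries.ofScalars_apply_eq, ← Ring.multichoose_eq,
    ← invSqrtCoeff_eq_multichoose, smul_eq_mul, zero_add] at h
  rwa [Real.sqrt_eq_rpow]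

noncomputable def arcsinDerivCoeff (m : ℕ) : ℝ := if Even m then invSqrtCoeff (m / 2) else 0

lemma arcsinDerivCoeff_nonneg (m : ℕ) : 0 ≤ arcsinDerivCoeff m := by
  unfold arcsinDerivCoeff; split_ifs <;> simp [invSqrtCoeff_nonneg]

lemma arcsinDerivCoeff_le_one (m : ℕ) : arcsinDerivCoeff m ≤ 1 := by
  unfold arcsinDerivCoeff; split_ifs <;> simp [invSqrtCoeff_le_one]

lemma hasSum_arcsinDerivCoeff_mul_pow {x : ℝ} (hx : |x| < 1) :
    HasSum (fun m => arcsinDerivCoeff m * x ^ m) (1 / √(1 - x ^ 2)) := by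
  have hx2 : |x ^ 2| < 1 := by rw [abs_pow]; exact pow_lt_one₀ (abs_nonneg x) hx two_ne_zero
  have heven (k : ℕ) : arcsinDerivCoeff (2 * k) * x ^ (2 * k) = invSqrtCoeff k * (x ^ 2) ^ k := by
    simp [arcsinDerivCoeff, pow_mul]
  have hodd (k : ℕ) : arcsinDerivCoeff (2 * k + 1) * x ^ (2 * k + 1) = 0 := by
    simp [arcsinDerivCoeff]
  have h := HasSum.even_add_odd (f := fun m => arcsinDerivCoeff m * x ^ m)
    (by simpa only [heven] using hasSum_invSqrtCoeff_mul_pow hx2)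
    (by simpa only [hodd] using hasSum_zero)
  rwa [add_zero] at h

lemma sum_antidiagonal_arcsinDerivCoeff_mul (f : ℕ → ℝ) (n : ℕ) :
    ∑ ij ∈ antidiagonal n, arcsinDerivCoeff ij.1 * f ij.2 =
      ∑ k ∈ range (n / 2 + 1), invSqrtCoeff k * f (n - 2 * k) := by
  rw [Nat.sum_antidiagonal_eq_sum_range_succ (fun i j => arcsinDerivCoeff i * f j)]
  simp only [arcsinDerivCoeff, ite_mul, zero_mul]
  rw [← sum_filter]
  refine sum_nbij' (· / 2) (2 * ·) ?_ ?_ ?_ ?_ ?_ <;>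
    simp only [mem_filter, mem_range, Nat.even_iff]
  all_goals intro i hi
  all_goals first | omega | rw [Nat.mul_div_cancel' (Nat.dvd_of_mod_eq_zero hi.2)]

lemma hasDerivAt_tsum_mul_pow {q : ℕ → ℝ} {s x : ℝ}
    (hq : Summable fun n => (n + 1) * ‖q (n + 1)‖ * s ^ n) (hx : |x| < s) :
    HasDerivAt (fun y => ∑' n, q n * y ^ n) (∑' n, (n + 1) * q (n + 1) * x ^ n) x := by
  have hs : Summable fun n => ‖q n‖ * (n * s ^ (n - 1)) := by
    refine (summable_nat_add_iff 1).1 (hq.congr fun n => ?_)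
    simp only [Nat.cast_add, Nat.cast_one, Nat.add_sub_cancel]
    ring
  have hbound (n : ℕ) (y : ℝ) (hy : y ∈ Set.Ioo (-s) s) :
      ‖q n * (n * y ^ (n - 1))‖ ≤ ‖q n‖ * (n * s ^ (n - 1)) := by
    rw [norm_mul, norm_mul, Real.norm_natCast, norm_pow]
    gcongr
    exact (abs_lt.2 hy).le
  have hxs : x ∈ Set.Ioo (-s) s := abs_lt.1 hx
  have hderiv := hasDerivAt_tsum_of_isPreconnected (y₀ := 0) hs isOpen_Ioo isPreconnected_Ioo
    (fun n y _ => (hasDerivAt_pow n y).const_mul (q n)) hbound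
    ⟨by linarith [abs_nonneg x], by linarith [abs_nonneg x]⟩
    (summable_of_ne_finset_zero (s := {0}) fun n hn => by simp_all) hxs
  have hsum : Summable fun n => q n * (n * x ^ (n - 1)) := hs.of_norm_bounded (hbound · x hxs)
  rw [tsum_eq_zero_add' ((summable_nat_add_iff 1).2 hsum)] at hderiv
  refine hderiv.congr_deriv ?_
  simp only [CharP.cast_eq_zero, zero_mul, mul_zero, zero_add, Nat.add_sub_cancel, Nat.cast_succ]
  exact tsum_congr fun n => by ring

lemma eq_mul_exp_sub_of_hasDerivAt {f φ φ' : ℝ → ℝ} {s : Set ℝ} (hs : IsOpen s)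
    (hs' : IsPreconnected s) (hf : ∀ y ∈ s, HasDerivAt f (φ' y * f y) y)
    (hφ : ∀ y ∈ s, HasDerivAt φ (φ' y) y) {x₀ x : ℝ} (hx₀ : x₀ ∈ s) (hx : x ∈ s) :
    f x = f x₀ * exp (φ x - φ x₀) := by
  have hG : ∀ y ∈ s, HasDerivAt (fun z => f z * exp (-φ z)) 0 y := fun y hy => by
    refine ((hf y hy).fun_mul (hφ y hy).fun_neg.exp).congr_deriv ?_
    ring
  have hconst := hs.is_const_of_deriv_eq_zero hs'
    (fun y hy => (hG y hy).differentiableAt.differentiableWithinAt) (fun y hy => (hG y hy).deriv)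
    hx hx₀
  rw [sub_eq_add_neg, exp_add, mul_left_comm, ← hconst, mul_left_comm, ← exp_add]
  simp

lemma summable_of_tsum_mul_pow_le {q : ℕ → ℝ} {L : ℝ} (hq : ∀ n, 0 ≤ q n)
    (hsum : ∀ t ∈ Set.Ico (0 : ℝ) 1, Summable fun n => q n * t ^ n)
    (hle : ∀ t ∈ Set.Ico (0 : ℝ) 1, ∑' n, q n * t ^ n ≤ L) : Summable q := by
  refine summable_of_sum_range_le hq (c := L) fun N => ?_
  have hcont : Continuous fun t : ℝ => ∑ n ∈ range N, q n * t ^ n := by fun_prop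
  have hlim : Tendsto (fun t : ℝ => ∑ n ∈ range N, q n * t ^ n) (𝓝[<] 1)
      (𝓝 (∑ n ∈ range N, q n)) := by
    simpa using (hcont.tendsto 1).mono_left nhdsWithin_le_nhds
  refine le_of_tendsto hlim ?_
  filter_upwards [Ioo_mem_nhdsLT (show (0 : ℝ) < 1 by norm_num)] with t ht
  have ht' : t ∈ Set.Ico (0 : ℝ) 1 := Set.Ioo_subset_Ico_self ht
  exact ((hsum t ht').sum_le_tsum _ fun n _ => mul_nonneg (hq n) (pow_nonneg ht'.1 n)).trans
    (hle t ht')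

lemma hasSum_integral_mul_pow {α : Type*} [MeasurableSpace α] {μ : Measure α} [IsFiniteMeasure μ]
    {g : ℕ → α → ℝ} {F : α → ℝ} (hg : ∀ n, AEStronglyMeasurable (g n) μ)
    (hg_nonneg : ∀ n, ∀ᵐ a ∂μ, 0 ≤ g n a) (hg_one : ∀ᵐ a ∂μ, HasSum (fun n => g n a) 1)
    {x : ℝ} (hx : |x| ≤ 1) (hF : ∀ᵐ a ∂μ, HasSum (fun n => g n a * x ^ n) (F a)) :
    HasSum (fun n => (∫ a, g n a ∂μ) * x ^ n) (∫ a, F a ∂μ) := by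
  have h := hasSum_integral_of_dominated_convergence (F := fun n a => g n a * x ^ n) g
    (fun n => (hg n).mul_const _)
    (fun n => by
      filter_upwards [hg_nonneg n] with a ha
      rw [norm_mul, norm_pow, Real.norm_of_nonneg ha, Real.norm_eq_abs]
      exact mul_le_of_le_one_right ha (pow_le_one₀ (abs_nonneg x) hx))
    (by filter_upwards [hg_one] with a ha using ha.summable)
    ((integrable_const (1 : ℝ)).congr (by filter_upwards [hg_one] with a ha using ha.tsum_eq.symm))
    hF
  simpa only [integral_mul_const] using h

section Majorant

variable {a : ℝ} {p : ℕ → ℝ}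

lemma summable_sum_range_succ_mul_pow (hp : ∀ n, 0 ≤ p n)
    (hle : ∀ n, (n + 1) * p (n + 1) ≤ a * ∑ j ∈ range (n + 1), p j) {t : ℝ} (ht0 : 0 ≤ t)
    (ht1 : t < 1) : Summable fun n => (∑ j ∈ range (n + 1), p j) * t ^ n := by
  set S : ℕ → ℝ := fun n => ∑ j ∈ range (n + 1), p j
  have hS0 (n : ℕ) : 0 ≤ S n := sum_nonneg fun j _ => hp j
  have hS (n : ℕ) : S (n + 1) ≤ (1 + a / (n + 1)) * S n := by
    have := hle n
    have hsucc : S (n + 1) = S n + p (n + 1) := sum_range_succ _ _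
    rw [hsucc, add_mul, one_mul, div_mul_eq_mul_div, add_le_add_iff_left,
      le_div_iff₀ (by positivity)]
    linarith
  have hev : ∀ᶠ n : ℕ in atTop, a * t * (1 / ((n : ℝ) + 1)) < (1 - t) / 2 := by
    refine (tendsto_one_div_add_atTop_nhds_zero_nat.const_mul (a * t)).eventually (gt_mem_nhds ?_)
    linarith
  refine summable_of_ratio_norm_eventually_le (r := (1 + t) / 2) (by linarith) ?_
  filter_upwards [hev] with n hn
  rw [Real.norm_of_nonneg (mul_nonneg (hS0 _) (by positivity)),
    Real.norm_of_nonneg (mul_nonneg (hS0 _) (by positivity))]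
  calc S (n + 1) * t ^ (n + 1) ≤ (1 + a / (n + 1)) * S n * t ^ (n + 1) := by gcongr; exact hS n
    _ = (t + a * t * (1 / ((n : ℝ) + 1))) * (S n * t ^ n) := by ring
    _ ≤ (1 + t) / 2 * (S n * t ^ n) := by have := hS0 n; gcongr; linarith

lemma summable_norm_mul_pow (hp : ∀ n, 0 ≤ p n)
    (hle : ∀ n, (n + 1) * p (n + 1) ≤ a * ∑ j ∈ range (n + 1), p j) {x : ℝ} (hx : |x| < 1) :
    Summable fun n => ‖p n * x ^ n‖ := by
  refine (summable_sum_range_succ_mul_pow hp hle (abs_nonneg x) hx).of_nonneg_of_le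
    (fun n => norm_nonneg _) fun n => ?_
  rw [norm_mul, norm_pow, Real.norm_of_nonneg (hp n), Real.norm_eq_abs]
  gcongr
  exact single_le_sum (fun j _ => hp j) (self_mem_range_succ n)

lemma summable_succ_mul_norm_mul_pow (hp : ∀ n, 0 ≤ p n)
    (hle : ∀ n, (n + 1) * p (n + 1) ≤ a * ∑ j ∈ range (n + 1), p j) {t : ℝ} (ht0 : 0 ≤ t)
    (ht1 : t < 1) : Summable fun n => (n + 1) * ‖p (n + 1)‖ * t ^ n := by
  refine ((summable_sum_range_succ_mul_pow hp hle ht0 ht1).mul_left a).of_nonneg_of_le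
    (fun n => by positivity) fun n => ?_
  rw [Real.norm_of_nonneg (hp _), ← mul_assoc]
  exact mul_le_mul_of_nonneg_right (hle n) (by positivity)

end Majorant

/-- The coefficient recursion of the power series solving `f' = a (1 - x²)^(-1/2) f`, `f 0 = 1`. -/
def IsArcsinExpCoeff (a : ℝ) (p : ℕ → ℝ) : Prop :=
  p 0 = 1 ∧ ∀ n, (n + 1) * p (n + 1) = a * ∑ ij ∈ antidiagonal n, arcsinDerivCoeff ij.1 * p ij.2

namespace IsArcsinExpCoeff

variable {a : ℝ} {p : ℕ → ℝ}

lemma nonneg (hp : IsArcsinExpCoeff a p) (ha : 0 ≤ a) (n : ℕ) : 0 ≤ p n := by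
  induction n using Nat.strong_induction_on with
  | _ n ih =>
    rcases n with _ | n
    · exact hp.1 ▸ zero_le_one
    have hsum : 0 ≤ ∑ ij ∈ antidiagonal n, arcsinDerivCoeff ij.1 * p ij.2 :=
      sum_nonneg fun ij hij => mul_nonneg (arcsinDerivCoeff_nonneg _)
        (ih _ (by have := mem_antidiagonal.1 hij; omega))
    exact (mul_nonneg_iff_of_pos_left (by positivity)).1 (hp.2 n ▸ mul_nonneg ha hsum)

lemma succ_mul_le (hp : IsArcsinExpCoeff a p) (ha : 0 ≤ a) (n : ℕ) :
    (n + 1) * p (n + 1) ≤ a * ∑ j ∈ range (n + 1), p j := by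
  have hsnd : ∑ ij ∈ antidiagonal n, p ij.2 = ∑ j ∈ range (n + 1), p j :=
    (Nat.sum_antidiagonal_swap (f := fun ij => p ij.1)).trans
      (Nat.sum_antidiagonal_eq_sum_range_succ (fun i _ => p i) n)
  rw [hp.2, ← hsnd]
  gcongr with ij
  exact mul_le_of_le_one_left (hp.nonneg ha _) (arcsinDerivCoeff_le_one _)

lemma hasDerivAt_tsum_mul_pow (hp : IsArcsinExpCoeff a p) (ha : 0 ≤ a) {x : ℝ} (hx : |x| < 1) :
    HasDerivAt (fun y => ∑' n, p n * y ^ n) (a * (1 / √(1 - x ^ 2)) * ∑' n, p n * x ^ n) x := by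
  have hcoeff : Summable fun m => ‖arcsinDerivCoeff m * x ^ m‖ := by
    refine (summable_geometric_of_lt_one (abs_nonneg x) hx).of_nonneg_of_le
      (fun m => norm_nonneg _) fun m => ?_
    rw [norm_mul, norm_pow, Real.norm_of_nonneg (arcsinDerivCoeff_nonneg m), Real.norm_eq_abs]
    exact mul_le_of_le_one_left (by positivity) (arcsinDerivCoeff_le_one m)
  refine (_root_.hasDerivAt_tsum_mul_pow (s := (|x| + 1) / 2)
    (summable_succ_mul_norm_mul_pow (hp.nonneg ha) (hp.succ_mul_le ha) (by positivity)
      (by linarith)) (by linarith)).congr_deriv ?_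
  rw [← (hasSum_arcsinDerivCoeff_mul_pow hx).tsum_eq, mul_assoc,
    tsum_mul_tsum_eq_tsum_sum_antidiagonal_of_summable_norm hcoeff
      (summable_norm_mul_pow (hp.nonneg ha) (hp.succ_mul_le ha) hx), ← tsum_mul_left]
  refine tsum_congr fun n => ?_
  rw [hp.2, mul_assoc, sum_mul]
  congr 1
  refine sum_congr rfl fun ij hij => ?_
  rw [← mem_antidiagonal.1 hij, pow_add]
  ring

lemma tsum_mul_pow_eq_exp (hp : IsArcsinExpCoeff a p) (ha : 0 ≤ a) {x : ℝ} (hx : |x| < 1) :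
    ∑' n, p n * x ^ n = exp (a * arcsin x) := by
  have h := eq_mul_exp_sub_of_hasDerivAt isOpen_Ioo isPreconnected_Ioo
    (fun y hy => hp.hasDerivAt_tsum_mul_pow ha (abs_lt.2 hy))
    (fun y hy => (hasDerivAt_arcsin (ne_of_gt hy.1) (ne_of_lt hy.2)).const_mul a)
    (show (0 : ℝ) ∈ Set.Ioo (-1) 1 by norm_num) (abs_lt.1 hx)
  have h0 : ∑' n, p n * (0 : ℝ) ^ n = 1 := by
    rw [tsum_eq_single 0 fun n hn => by simp [hn]]
    simp [hp.1]
  simpa [h0] using h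

lemma hasSum_mul_pow_exp (hp : IsArcsinExpCoeff a p) (ha : 0 ≤ a) {x : ℝ}
    (hx : x ∈ Set.Icc (-1) 1) : HasSum (fun n => p n * x ^ n) (exp (a * arcsin x)) := by
  have habs {t : ℝ} (ht : t ∈ Set.Ico (0 : ℝ) 1) : |t| < 1 := by rw [abs_of_nonneg ht.1]; exact ht.2
  have hsummable : Summable p := summable_of_tsum_mul_pow_le (L := exp (a * (π / 2)))
    (hp.nonneg ha) (fun t ht => (summable_norm_mul_pow (hp.nonneg ha) (hp.succ_mul_le ha)
      (habs ht)).of_norm) fun t ht => by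
    rw [hp.tsum_mul_pow_eq_exp ha (habs ht)]
    gcongr
    exact arcsin_le_pi_div_two t
  have hsum : Summable fun n => p n * x ^ n := hsummable.of_norm_bounded fun n => by
    rw [norm_mul, norm_pow, Real.norm_of_nonneg (hp.nonneg ha n), Real.norm_eq_abs]
    exact mul_le_of_le_one_right (hp.nonneg ha n) (pow_le_one₀ (abs_nonneg x) (abs_le.2 hx))
  have habel := Real.tendsto_tsum_powerSeries_nhdsWithin_lt hsum.hasSum.tendsto_sum_nat
  have hcont : Tendsto (fun t => exp (a * arcsin (x * t))) (𝓝[<] 1) (𝓝 (exp (a * arcsin x))) := by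
    have : Continuous fun t => exp (a * arcsin (x * t)) := by fun_prop
    simpa using (this.tendsto 1).mono_left nhdsWithin_le_nhds
  have heq : (fun t => ∑' n, p n * x ^ n * t ^ n) =ᶠ[𝓝[<] 1]
      fun t => exp (a * arcsin (x * t)) := by
    filter_upwards [Ioo_mem_nhdsLT (show (0 : ℝ) < 1 by norm_num)] with t ht
    have hxt : |x * t| < 1 := by
      rw [abs_mul, abs_of_pos ht.1]
      exact (mul_le_of_le_one_left ht.1.le (abs_le.2 hx)).trans_lt ht.2
    simp_rw [← hp.tsum_mul_pow_eq_exp ha hxt, mul_pow, mul_assoc]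
  exact tendsto_nhds_unique (habel.congr' heq) hcont ▸ hsum.hasSum

end IsArcsinExpCoeff

/-- `r n a` is the `n`-th derivative of `exp (a * arcsin x)` at `x = 0`. -/
def IsArcsinExpDeriv (r : ℕ → ℝ → ℝ) : Prop :=
  (∀ a : ℝ, r 0 a = 1) ∧ ∀ (n : ℕ) (a : ℝ), r (n + 1) a = a *
    ∑ k ∈ range (n / 2 + 1),
      (Nat.choose n (2 * k) : ℝ) * r (n - 2 * k) a * (((∏ i ∈ range k, (2 * i + 1) : ℕ)) : ℝ) ^ 2

namespace IsArcsinExpDeriv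

variable {r : ℕ → ℝ → ℝ}

lemma isArcsinExpCoeff (hr : IsArcsinExpDeriv r) (a : ℝ) :
    IsArcsinExpCoeff a fun n => r n a / n.factorial := by
  refine ⟨by simp [hr.1], fun n => ?_⟩
  have hfac : (n + 1) * (r (n + 1) a / (n + 1).factorial) = r (n + 1) a / n.factorial := by
    rw [Nat.factorial_succ]
    push_cast
    field_simp
  rw [hfac, sum_antidiagonal_arcsinDerivCoeff_mul (fun j => r j a / j.factorial), hr.2,
    mul_div_assoc, sum_div]
  congr 1
  refine sum_congr rfl fun k hk => ?_
  have h2k : 2 * k ≤ n := by have := mem_range.1 hk; omega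
  rw [invSqrtCoeff_eq_div_factorial, Nat.cast_choose ℝ h2k]
  field_simp

lemma measurable (hr : IsArcsinExpDeriv r) (n : ℕ) : Measurable (r n) := by
  induction n using Nat.strong_induction_on with
  | _ n ih =>
    rcases n with _ | n
    · simp only [funext hr.1, measurable_const]
    rw [funext (hr.2 n)]
    refine measurable_id.mul (Finset.measurable_sum _ fun k _ => ?_)
    exact ((ih _ (by omega)).const_mul _).mul_const _

lemma nonneg (hr : IsArcsinExpDeriv r) {a : ℝ} (ha : 0 ≤ a) (n : ℕ) : 0 ≤ r n a := by
  have h := mul_nonneg ((hr.isArcsinExpCoeff a).nonneg ha n) (Nat.cast_nonneg (α := ℝ) n.factorial)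
  rwa [div_mul_cancel₀ _ (by positivity)] at h

lemma hasSum_exp_neg_mul_arccos (hr : IsArcsinExpDeriv r) {a : ℝ} (ha : 0 ≤ a) {x : ℝ}
    (hx : x ∈ Set.Icc (-1) 1) :
    HasSum (fun n => exp (-(a * π / 2)) * r n a / n.factorial * x ^ n) (exp (-(a * arccos x))) := by
  have h := ((hr.isArcsinExpCoeff a).hasSum_mul_pow_exp ha hx).mul_left (exp (-(a * π / 2)))
  rw [← exp_add] at h
  rw [arccos_eq_pi_div_two_sub_arcsin,
    show -(a * (π / 2 - arcsin x)) = -(a * π / 2) + a * arcsin x by ring]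
  simpa only [mul_div_assoc, mul_assoc] using h

end IsArcsinExpDeriv

/-- Gneiting's theorem revisited: if `ρ(θ) = ∫ e^{−aθ} dμ(a)` for a probability
measure `μ` on `[0,∞)`, then `x ↦ ρ(arccos x)` on `[−1,1]` equals `∑ (cₙ/n!) xⁿ`
with `cₙ = ∫ e^{−aπ/2} rₙ(a) dμ(a) ≥ 0` and `∑ cₙ/n! = ρ(0) < ∞`, where the `rₙ`
satisfy `r₀ = 1`, `r_{n+1}(a) = a·∑_{k≤⌊n/2⌋} binom(n,2k)·r_{n−2k}(a)·((2k−1)!!)²`. -/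
theorem completely_monotonic_sphere_expansion
    (μ : MeasureTheory.Measure ℝ) [MeasureTheory.IsProbabilityMeasure μ]
    (hμ : μ (Set.Iio 0) = 0)
    (r : ℕ → ℝ → ℝ) (h0 : ∀ a : ℝ, r 0 a = 1)
    (hrec : ∀ (n : ℕ) (a : ℝ), r (n + 1) a = a *
      ∑ k ∈ Finset.range (n / 2 + 1),
        (Nat.choose n (2 * k) : ℝ) * r (n - 2 * k) a *
          (((∏ i ∈ Finset.range k, (2 * i + 1) : ℕ)) : ℝ) ^ 2)
    (ρ : ℝ → ℝ) (hρ : ∀ θ : ℝ, ρ θ = ∫ a, Real.exp (-(a * θ)) ∂μ)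
    (c : ℕ → ℝ) (hc : ∀ n : ℕ, c n = ∫ a, Real.exp (-(a * Real.pi / 2)) * r n a ∂μ) :
    (∀ n, 0 ≤ c n) ∧
    Summable (fun n : ℕ => c n / Nat.factorial n) ∧
    (∑' n : ℕ, c n / Nat.factorial n) = ρ 0 ∧
    ∀ x ∈ Set.Icc (-1 : ℝ) 1,
      ρ (Real.arccos x) = ∑' n : ℕ, c n / Nat.factorial n * x ^ n := by
  have hr : IsArcsinExpDeriv r := ⟨h0, hrec⟩
  have hae : ∀ᵐ a ∂μ, 0 ≤ a := by
    rw [ae_iff, ← hμ]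
    simp only [not_le, Set.Iio_def]
  set g : ℕ → ℝ → ℝ := fun n a => exp (-(a * π / 2)) * r n a / n.factorial
  have hg_meas (n : ℕ) : Measurable (g n) := by
    have := hr.measurable n
    fun_prop
  have hg_nonneg (n : ℕ) : ∀ᵐ a ∂μ, 0 ≤ g n a := by
    filter_upwards [hae] with a ha
    have := hr.nonneg ha n
    positivity
  have hg_one : ∀ᵐ a ∂μ, HasSum (fun n => g n a) 1 := by
    filter_upwards [hae] with a ha
    simpa using hr.hasSum_exp_neg_mul_arccos ha (x := 1) (by norm_num)
  have hg_int (n : ℕ) : ∫ a, g n a ∂μ = c n / n.factorial := by rw [hc, integral_div]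
  have hsum (x : ℝ) (hx : x ∈ Set.Icc (-1 : ℝ) 1) :
      HasSum (fun n => c n / n.factorial * x ^ n) (ρ (arccos x)) := by
    rw [hρ]
    simpa only [hg_int] using hasSum_integral_mul_pow (fun n => (hg_meas n).aestronglyMeasurable)
      hg_nonneg hg_one (abs_le.2 hx)
      (by filter_upwards [hae] with a ha using hr.hasSum_exp_neg_mul_arccos ha hx)
  have hsum_one : HasSum (fun n => c n / n.factorial) (ρ 0) := by
    simpa using hsum 1 (by norm_num)
  refine ⟨fun n => ?_, hsum_one.summable, hsum_one.tsum_eq, fun x hx => (hsum x hx).tsum_eq.symm⟩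
  have h := mul_nonneg (integral_nonneg_of_ae (hg_nonneg n)) (Nat.cast_nonneg (α := ℝ) n.factorial)
  rwa [hg_int, div_mul_cancel₀ _ (by positivity)] at h
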